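/- Let A and B be positive definite complex n×n matrices and let s, t ∈ ℝ. Then G_s(G_t(A,B), B) = G_{s+t−s·t}(A,B). -/

import Mathlib

open Matrix Kronecker
open scoped ComplexOrder

noncomputable section

/-- Apply a real function to a complex matrix via the spectral decomposition
(meaningful for Hermitian matrices; defined as `0` otherwise). -/
def matFun {n : Type*} [Fintype n] [DecidableEq n]
    (f : ℝ → ℝ) (A : Matrix n n ℂ) : Matrix n n ℂ :=
  if hA : A.IsHermitian then
    (hA.eigenvectorUnitary : Matrix n n ℂ) *
      Matrix.diagonal (fun i => (f (hA.eigenvalues i) : ℂ)) *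
      (hA.eigenvectorUnitary : Matrix n n ℂ)ᴴ
  else 0

/-- Real power of a matrix (via the spectral decomposition). -/
def mpow {n : Type*} [Fintype n] [DecidableEq n] (A : Matrix n n ℂ) (t : ℝ) :
    Matrix n n ℂ :=
  matFun (fun x => x ^ t) A

/-- Logarithm of a matrix (via the spectral decomposition). -/
def mlog {n : Type*} [Fintype n] [DecidableEq n] (A : Matrix n n ℂ) : Matrix n n ℂ :=
  matFun Real.log A

/-- The operator relative entropy `D_op(X‖Y) = X^{1/2} log(X^{1/2} Y⁻¹ X^{1/2}) X^{1/2}`. -/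
def Dop {n : Type*} [Fintype n] [DecidableEq n] (X Y : Matrix n n ℂ) : Matrix n n ℂ :=
  mpow X (1/2) * mlog (mpow X (1/2) * Y⁻¹ * mpow X (1/2)) * mpow X (1/2)

/-- The Belavkin--Staszewski relative entropy `D̂(ρ‖σ) = Re Tr[D_op(ρ‖σ)]`. -/
def BSEntropy {n : Type*} [Fintype n] [DecidableEq n] (ρ σ : Matrix n n ℂ) : ℝ :=
  (Dop ρ σ).trace.re

/-- The weighted matrix geometric mean `G_t(X,Y) = X^{1/2} (X^{-1/2} Y X^{-1/2})^t X^{1/2}`. -/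
def geoMean {n : Type*} [Fintype n] [DecidableEq n] (t : ℝ) (X Y : Matrix n n ℂ) :
    Matrix n n ℂ :=
  mpow X (1/2) * mpow (mpow X (-(1/2)) * Y * mpow X (-(1/2))) t * mpow X (1/2)

/-- Partial trace over the second (B) factor. -/
def ptraceB {R B : Type*} [Fintype B] (M : Matrix (R × B) (R × B) ℂ) : Matrix R R ℂ :=
  Matrix.of fun r r' => ∑ b, M (r, b) (r', b)

/-- Partial trace over the first (R) factor. -/
def ptraceR {R A : Type*} [Fintype R] (M : Matrix (R × A) (R × A) ℂ) : Matrix A A ℂ :=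
  Matrix.of fun a a' => ∑ r, M (r, a) (r, a')

/-- The map associated to a Choi matrix `J` (indexed by `(A × B) × (A × B)`), applied to a
matrix indexed by `(R × A) × (R × A)`. -/
def choiMap {R A B : Type*} [Fintype A] (J : Matrix (A × B) (A × B) ℂ)
    (X : Matrix (R × A) (R × A) ℂ) : Matrix (R × B) (R × B) ℂ :=
  Matrix.of fun p q => ∑ a, ∑ a', X (p.1, a) (q.1, a') * J (a, p.2) (a', q.2)

/-!
Two laws of the weighted geometric mean give the result: the symmetry
`G_s(X, Y) = G_{1-s}(Y, X)` and the composition law `G_s(X, G_t(X, Y)) = G_{ts}(X, Y)`, whence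
`G_s(G_t(A, B), B) = G_{1-s}(B, G_{1-t}(B, A)) = G_{(1-t)(1-s)}(B, A) = G_{s+t-st}(A, B)`.
The composition law is `(M^t)^s = M^{ts}`. For the symmetry, `Z = X^{-1/2} Y^{1/2}` conjugates
`N⁻¹` to `M`, where `M = X^{-1/2} Y X^{-1/2}` and `N = Y^{-1/2} X Y^{-1/2}`; on the finite
spectrum of a Hermitian matrix every function is a polynomial, so `Z` also intertwines `N^{-s}`
with `M^s`.
-/

open scoped MatrixOrder

theorem SemiconjBy.aeval {R A : Type*} [CommSemiring R] [Semiring A] [Algebra R A] {x a b : A}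
    (h : SemiconjBy x a b) (p : Polynomial R) :
    SemiconjBy x (Polynomial.aeval a p) (Polynomial.aeval b p) := by
  induction p using Polynomial.induction_on' with
  | add p q hp hq => simpa only [map_add] using hp.add_right hq
  | monomial k r =>
    simpa only [Polynomial.aeval_monomial] using
      SemiconjBy.mul_right (Algebra.commute_algebraMap_left r x).symm (h.pow_right k)

namespace Matrix

variable {n : Type*} [Fintype n] [DecidableEq n]

theorem IsHermitian.semiconjBy_cfc {𝕜 : Type*} [RCLike 𝕜] {x a b : Matrix n n 𝕜}
    (ha : a.IsHermitian) (hb : b.IsHermitian) (h : SemiconjBy x a b) (f : ℝ → ℝ) :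
    SemiconjBy x (cfc f a) (cfc f b) := by
  obtain ⟨p, hp⟩ := (Polynomial.exists_eval_eq_iff
    (fun z : ↥(spectrum ℝ a ∪ spectrum ℝ b) => (z : ℝ)) (fun z => f z)).mpr
    fun _ _ hij => by rw [Subtype.ext hij]
  have hfp : Set.EqOn f (fun z => p.eval z) (spectrum ℝ a ∪ spectrum ℝ b) :=
    fun z hz => (hp ⟨z, hz⟩).symm
  rw [cfc_congr (hfp.mono Set.subset_union_left), cfc_congr (hfp.mono Set.subset_union_right),
    cfc_polynomial p a ha.isSelfAdjoint, cfc_polynomial p b hb.isSelfAdjoint]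
  exact h.aeval p

theorem IsHermitian.matFun_eq_cfc {A : Matrix n n ℂ} (hA : A.IsHermitian) (f : ℝ → ℝ) :
    matFun f A = cfc f A := by
  rw [hA.cfc_eq, IsHermitian.cfc, matFun, dif_pos hA, Unitary.conjStarAlgAut_apply]
  rfl

theorem IsHermitian.mpow_eq_cfc {A : Matrix n n ℂ} (hA : A.IsHermitian) (r : ℝ) :
    mpow A r = cfc (fun x : ℝ => x ^ r) A :=
  hA.matFun_eq_cfc _

theorem isHermitian_mpow (A : Matrix n n ℂ) (r : ℝ) : (mpow A r).IsHermitian := by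
  by_cases hA : A.IsHermitian
  · rw [hA.mpow_eq_cfc]
    exact IsSelfAdjoint.cfc
  · simp [mpow, matFun, hA]

variable {X Y : Matrix n n ℂ}

theorem IsHermitian.mpow_zero (hX : X.IsHermitian) : mpow X 0 = 1 := by
  simp only [hX.mpow_eq_cfc, Real.rpow_zero]
  exact cfc_const_one ℝ X hX.isSelfAdjoint

theorem IsHermitian.mpow_one (hX : X.IsHermitian) : mpow X 1 = X := by
  simp only [hX.mpow_eq_cfc, Real.rpow_one]
  exact cfc_id' ℝ X hX.isSelfAdjoint

theorem PosSemidef.mpow_mpow (hX : X.PosSemidef) (r s : ℝ) :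
    mpow (mpow X r) s = mpow X (r * s) := by
  have hspec := X.finite_real_spectrum
  rw [(isHermitian_mpow X r).mpow_eq_cfc, hX.isHermitian.mpow_eq_cfc, hX.isHermitian.mpow_eq_cfc,
    ← cfc_comp' _ _ X ((hspec.image _).continuousOn _) (hspec.continuousOn _)
      hX.isHermitian.isSelfAdjoint]
  refine cfc_congr fun x hx => ?_
  exact (Real.rpow_mul (spectrum_nonneg_of_nonneg (nonneg_iff_posSemidef.mpr hX) hx) r s).symm

theorem PosDef.mpow_add (hX : X.PosDef) (r s : ℝ) :
    mpow X (r + s) = mpow X r * mpow X s := by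
  simp only [hX.isHermitian.mpow_eq_cfc]
  rw [← cfc_mul _ _ X (X.finite_real_spectrum.continuousOn _)
    (X.finite_real_spectrum.continuousOn _)]
  exact cfc_congr fun x hx => Real.rpow_add (hX.isStrictlyPositive.spectrum_pos hx) r s

theorem posDef_mpow (hX : X.PosDef) (r : ℝ) : (mpow X r).PosDef := by
  rw [hX.isHermitian.mpow_eq_cfc, ← isStrictlyPositive_iff_posDef,
    cfc_isStrictlyPositive_iff _ X (X.finite_real_spectrum.continuousOn _)
      hX.isHermitian.isSelfAdjoint]
  exact fun x hx => Real.rpow_pos_of_pos (hX.isStrictlyPositive.spectrum_pos hx) r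

theorem PosDef.mpow_half_mul_mpow_half (hX : X.PosDef) :
    mpow X (1 / 2) * mpow X (1 / 2) = X := by
  rw [← hX.mpow_add, add_halves, hX.isHermitian.mpow_one]

theorem PosDef.mul_mpow_neg_one (hX : X.PosDef) : X * mpow X (-1) = 1 := by
  nth_rewrite 1 [← hX.isHermitian.mpow_one]
  rw [← hX.mpow_add, add_neg_cancel, hX.isHermitian.mpow_zero]

theorem PosDef.exists_unit_mpow (hX : X.PosDef) (r : ℝ) :
    ∃ u : (Matrix n n ℂ)ˣ, u.val = mpow X r ∧ u.inv = mpow X (-r) := by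
  refine ⟨⟨mpow X r, mpow X (-r), ?_, ?_⟩, rfl, rfl⟩
  · rw [← hX.mpow_add, add_neg_cancel, hX.isHermitian.mpow_zero]
  · rw [← hX.mpow_add, neg_add_cancel, hX.isHermitian.mpow_zero]

theorem PosDef.mpow_mul_mul_mpow (hY : Y.PosDef) (hX : X.PosDef) (r : ℝ) :
    (mpow X r * Y * mpow X r).PosDef := by
  obtain ⟨u, hu, -⟩ := hX.exists_unit_mpow r
  have hunit : IsUnit (mpow X r) := hu ▸ u.isUnit
  simpa only [(isHermitian_mpow X r).eq] using
    hY.conjTranspose_mul_mul_same (mulVec_injective_iff_isUnit.mpr hunit)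

end Matrix

section GeoMean

variable {n : Type*} [Fintype n] [DecidableEq n] {X Y : Matrix n n ℂ}

theorem geoMean_posDef (hX : X.PosDef) (hY : Y.PosDef) (t : ℝ) : (geoMean t X Y).PosDef :=
  (posDef_mpow (hY.mpow_mul_mul_mpow hX _) t).mpow_mul_mul_mpow hX _

theorem geoMean_geoMean_left (hX : X.PosDef) (hY : Y.PosSemidef) (s t : ℝ) :
    geoMean s X (geoMean t X Y) = geoMean (t * s) X Y := by
  have hM : (mpow X (-(1 / 2)) * Y * mpow X (-(1 / 2))).PosSemidef := by
    simpa only [(isHermitian_mpow X _).eq] using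
      hY.conjTranspose_mul_mul_same (mpow X (-(1 / 2)))
  obtain ⟨u, hu, hu'⟩ := hX.exists_unit_mpow (1 / 2)
  rw [geoMean, geoMean, geoMean, ← hM.mpow_mpow, ← hu, ← hu']
  simp only [Units.inv_eq_val_inv, mul_assoc, Units.mul_inv, mul_one, Units.inv_mul_cancel_left]

theorem geoMean_comm (hX : X.PosDef) (hY : Y.PosDef) (s : ℝ) :
    geoMean s X Y = geoMean (1 - s) Y X := by
  obtain ⟨u, hu, hu'⟩ := hX.exists_unit_mpow (1 / 2)
  obtain ⟨v, hv, hv'⟩ := hY.exists_unit_mpow (1 / 2)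
  have hM : (u.inv * Y * u.inv).IsHermitian := hu' ▸ (hY.mpow_mul_mul_mpow hX _).isHermitian
  have hN : (v.inv * X * v.inv).PosDef := hv' ▸ hX.mpow_mul_mul_mpow hY _
  have hXu : X = u.val * u.val := by rw [hu, hX.mpow_half_mul_mpow_half]
  have hYv : Y = v.val * v.val := by rw [hv, hY.mpow_half_mul_mpow_half]
  rw [geoMean, geoMean, ← hu, ← hu', ← hv, ← hv']
  set M := u.inv * Y * u.inv with hMdef
  set N := v.inv * X * v.inv with hNdef
  have hsemi : SemiconjBy (u.inv * v.val) (mpow N (-1)) M :=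
    calc u.inv * v.val * mpow N (-1) = M * (u.inv * v.val) * N * mpow N (-1) := by
          congr 1
          simp only [hMdef, hNdef, hXu, hYv]
          simp [mul_assoc]
      _ = M * (u.inv * v.val) := by rw [mul_assoc _ N, hN.mul_mpow_neg_one, mul_one]
  have key := (isHermitian_mpow N (-1)).semiconjBy_cfc hM hsemi (· ^ s)
  rw [← (isHermitian_mpow N (-1)).mpow_eq_cfc, ← hM.mpow_eq_cfc, hN.posSemidef.mpow_mpow] at key
  calc u.val * mpow M s * u.val = u.val * (mpow M s * (u.inv * v.val)) * (v.inv * X) := by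
        rw [hXu]; simp [mul_assoc]
    _ = v.val * mpow N (-1 * s) * N * v.val := by
        rw [← key, hNdef, hXu]; simp [mul_assoc]
    _ = v.val * mpow N (1 - s) * v.val := by
        rw [mul_assoc _ _ N]
        nth_rewrite 2 [← hN.isHermitian.mpow_one]
        rw [← hN.mpow_add, show -1 * s + 1 = 1 - s by ring]

end GeoMean

/-- `G_s(G_t(A,B), B) = G_{s+t−s·t}(A,B)`. -/
theorem geoMean_geoMean_right {n : ℕ}
    (A B : Matrix (Fin n) (Fin n) ℂ) (hA : A.PosDef) (hB : B.PosDef) (s t : ℝ) :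
    geoMean s (geoMean t A B) B = geoMean (s + t - s * t) A B := by
  rw [geoMean_comm (geoMean_posDef hA hB t) hB, geoMean_comm hA hB t,
    geoMean_geoMean_left hB hA.posSemidef, geoMean_comm hB hA]
  congr 1
  ring
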